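/- Let a be even, b odd positive, gcd(a,b) = 1, and define Q(a;b) := 6·(s(a;2b) + s(2a;b) − 2·s(a;b)). If Q(a;b) is an integer, then a² ≡ −1 (mod b); consequently Q(a;b) = 0 if and only if a² ≡ −1 (mod b). -/

import Mathlib

/-!
Finite Fourier analysis on `ℤ/n` shows that `cot (π m / n)` is `2i` times the transform of the
sawtooth `((x))`; this turns the cotangent sum into the classical form
`s(c;n) = ∑_{k mod n} ((k/n)) ((ck/n))`. For `a = 2a'` even and `b` odd, the duplication formula
`((x + 1/2)) = ((2x)) - ((x))`, the identity `s(2c;2n) = s(c;n)` and the substitution `μ ↦ 2μ`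
modulo `b` give
`b² Q(a;b) = -6 b² ∑_{μ mod b} ((μ/b + 1/2)) ((aμ/b + 1/2)) = -6 ∑_{μ mod b} r(μ) r(aμ)`,
where `r` is the balanced residue modulo `b`. If `a² ≡ -1 (mod b)`, the substitution `μ ↦ aμ`
reverses the sign of the last sum, so `Q(a;b) = 0`. Conversely, write `r(aμ) = a r(μ) - D(μ)` with
`b ∣ D(μ)`; together with `∑ r(aμ)² = ∑ r(μ)² = b(b² - 1)/12`, integrality of `Q(a;b)` forces
`b ∣ (a² + 1)(b² - 1)`, hence `b ∣ a² + 1`.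
-/

open Finset Real

/-- The classical Dedekind sum `s(a;b)` defined by the cotangent sum. -/
noncomputable def dedekindS (a : ℤ) (b : ℕ) : ℝ :=
  (1 / (4 * (b : ℝ))) * ∑ ν ∈ Finset.Ico 1 b,
    Real.cot (Real.pi * a * ν / b) * Real.cot (Real.pi * ν / b)

/-- The rational part `Q(a;b)` of the elliptic classical Dedekind sum. -/
noncomputable def Qpart (a b : ℕ) : ℝ :=
  6 * (dedekindS a (2 * b) + dedekindS (2 * a) b - 2 * dedekindS a b)

/-- The classical sawtooth `((x))`; its value `0` at the integers makes `dedekindS_eq_sum_saw`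
hold for every `c`. -/
noncomputable def saw (x : ℝ) : ℝ := if Int.fract x = 0 then 0 else Int.fract x - 1 / 2

lemma periodic_saw : Function.Periodic saw 1 := fun x => by
  simp [saw]

@[simp]
lemma saw_add_intCast (x : ℝ) (m : ℤ) : saw (x + m) = saw x := by
  simp [saw]

@[simp]
lemma saw_zero : saw 0 = 0 := by
  simp [saw]

lemma saw_of_pos_of_lt_one {x : ℝ} (h0 : 0 < x) (h1 : x < 1) : saw x = x - 1 / 2 := by
  simp [saw, Int.fract_eq_self.2 ⟨h0.le, h1⟩, h0.ne']

lemma saw_half : saw (1 / 2) = 0 := by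
  norm_num [saw_of_pos_of_lt_one]

lemma saw_neg (x : ℝ) : saw (-x) = -saw x := by
  by_cases hx : Int.fract x = 0
  · simp [saw, hx, Int.fract_neg_eq_zero]
  · have h1 : 1 - Int.fract x ≠ 0 := sub_ne_zero.2 (Int.fract_lt_one x).ne'
    simp only [saw, hx, h1, if_false, Int.fract_neg hx]
    ring

lemma saw_add_half (x : ℝ) : saw (x + 1 / 2) = saw (2 * x) - saw x := by
  obtain ⟨f, k, hf0, hf1, rfl⟩ : ∃ f : ℝ, ∃ k : ℤ, 0 ≤ f ∧ f < 1 ∧ x = f + k :=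
    ⟨Int.fract x, ⌊x⌋, Int.fract_nonneg x, Int.fract_lt_one x, (Int.fract_add_floor x).symm⟩
  have h2 : 2 * (f + k) = 2 * f + ((2 * k : ℤ) : ℝ) := by push_cast; ring
  rw [add_right_comm, saw_add_intCast, h2, saw_add_intCast, saw_add_intCast]
  rcases hf0.eq_or_lt with rfl | hf0
  · rw [zero_add, mul_zero, saw_half, saw_zero, sub_self]
  rcases lt_trichotomy f (1 / 2) with hlt | rfl | hgt
  · rw [saw_of_pos_of_lt_one (by linarith) (by linarith),
      saw_of_pos_of_lt_one (by linarith) (by linarith), saw_of_pos_of_lt_one hf0 hf1]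
    ring
  · rw [saw_half]
    norm_num
  · have hshift : f + 1 / 2 = (f - 1 / 2) + ((1 : ℤ) : ℝ) := by push_cast; ring
    have hdouble : 2 * f = (2 * f - 1) + ((1 : ℤ) : ℝ) := by push_cast; ring
    rw [hshift, hdouble, saw_add_intCast, saw_add_intCast,
      saw_of_pos_of_lt_one (by linarith) (by linarith),
      saw_of_pos_of_lt_one (by linarith) (by linarith), saw_of_pos_of_lt_one hf0 hf1]
    ring

lemma periodic_saw_div {n : ℕ} (hn : 0 < n) : Function.Periodic (fun m : ℤ => saw (m / n)) n := by
  intro m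
  have hn' : (n : ℝ) ≠ 0 := by positivity
  simp only [Int.cast_add, Int.cast_natCast, add_div, div_self hn']
  exact periodic_saw _

lemma saw_div_add_half_of_odd {b : ℕ} (hb : Odd b) (m : ℤ) :
    saw (m / b + 1 / 2) = (m.bmod b : ℝ) / b := by
  have hlo := Int.le_bmod (x := m) hb.pos
  have hhi := Int.bmod_lt (x := m) hb.pos
  have hm : (m : ℝ) = m.bmod b + b * m.bdiv b := by exact_mod_cast (Int.bmod_add_bdiv m b).symm
  have hbR : (0 : ℝ) < b := by exact_mod_cast hb.pos
  obtain ⟨j, rfl⟩ := hb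
  have hlo' : -(j : ℝ) ≤ m.bmod (2 * j + 1) := by
    exact_mod_cast (by omega : -(j : ℤ) ≤ m.bmod (2 * j + 1))
  have hhi' : (m.bmod (2 * j + 1) : ℝ) ≤ j := by
    exact_mod_cast (by omega : m.bmod (2 * j + 1) ≤ j)
  rw [hm, add_div, mul_div_cancel_left₀ _ hbR.ne', add_right_comm, saw_add_intCast,
    saw_of_pos_of_lt_one]
  · ring
  · push_cast at hbR ⊢
    rw [← sub_lt_iff_lt_add, zero_sub, lt_div_iff₀ hbR]; linarith
  · push_cast at hbR ⊢
    rw [← lt_sub_iff_add_lt, div_lt_iff₀ hbR]; linarith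

section Periodic

variable {M : Type*} {n : ℕ} [NeZero n] {f : ℤ → M}

lemma Function.Periodic.apply_intCast_val (hf : Function.Periodic f n) (m : ℤ) :
    f (m : ZMod n).val = f m := by
  rw [ZMod.val_intCast, Int.emod_def, mul_comm]
  exact hf.sub_int_mul_eq _

variable [AddCommMonoid M]

lemma Finset.sum_range_eq_sum_zmod_val (g : ℕ → M) :
    ∑ μ ∈ range n, g μ = ∑ x : ZMod n, g x.val := by
  refine Finset.sum_nbij' (fun μ => (μ : ZMod n)) ZMod.val (by simp) (by simp [ZMod.val_lt])
    (fun μ hμ => ZMod.val_cast_of_lt (mem_range.1 hμ)) (fun x _ => ZMod.natCast_zmod_val x) ?_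
  intro μ hμ
  rw [ZMod.val_cast_of_lt (mem_range.1 hμ)]

lemma Function.Periodic.sum_range_comp_add (hf : Function.Periodic f n) (t : ℤ) :
    ∑ μ ∈ range n, f (μ + t) = ∑ μ ∈ range n, f μ := by
  rw [Finset.sum_range_eq_sum_zmod_val (fun μ => f (μ + t)),
    Finset.sum_range_eq_sum_zmod_val (fun μ => f μ)]
  refine Fintype.sum_bijective _ (Equiv.addRight (t : ZMod n)).bijective _ _ fun x => ?_
  rw [← hf.apply_intCast_val (x.val + t)]
  simp

lemma Function.Periodic.sum_range_comp_mul (hf : Function.Periodic f n) {c : ℤ}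
    (hc : IsCoprime c n) : ∑ μ ∈ range n, f (c * μ) = ∑ μ ∈ range n, f μ := by
  obtain ⟨u, hu⟩ := (ZMod.coe_int_isUnit_iff_isCoprime c n).2 hc.symm
  rw [Finset.sum_range_eq_sum_zmod_val (fun μ => f (c * μ)),
    Finset.sum_range_eq_sum_zmod_val (fun μ => f μ)]
  refine Fintype.sum_bijective _ (Units.mulLeft_bijective u) _ _ fun x => ?_
  rw [← hf.apply_intCast_val (c * x.val)]
  simp [hu]

lemma Function.Periodic.sum_range_ite_dvd (hf : Function.Periodic f n) (t : ℤ) :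
    ∑ l ∈ range n, (if (n : ℤ) ∣ t + l then f l else 0) = f (-t) := by
  rw [Finset.sum_range_eq_sum_zmod_val (fun l => if (n : ℤ) ∣ t + l then f l else 0)]
  have hdvd (x : ZMod n) : (n : ℤ) ∣ t + x.val ↔ x = -t := by
    rw [← ZMod.intCast_zmod_eq_zero_iff_dvd, eq_neg_iff_add_eq_zero, add_comm]
    simp
  simp only [hdvd, Finset.sum_ite_eq', Finset.mem_univ, if_true]
  exact_mod_cast hf.apply_intCast_val (-t)

end Periodic

lemma sub_one_mul_sum_range_mul_pow {R : Type*} [CommRing R] (w : R) (n : ℕ) :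
    (w - 1) * ∑ k ∈ range n, (k : R) * w ^ k = n * w ^ n - ∑ k ∈ range n, w ^ (k + 1) := by
  induction n with
  | zero => simp
  | succ n ih =>
    rw [sum_range_succ, mul_add, ih, sum_range_succ]
    push_cast
    ring

lemma sum_range_saw_mul_pow {n : ℕ} (hn : 0 < n) {w : ℂ} (hw : w ^ n = 1) :
    ∑ k ∈ range n, (saw (k / n) : ℂ) * w ^ k = (w + 1) / (2 * (w - 1)) := by
  have hnC : (n : ℂ) ≠ 0 := by exact_mod_cast hn.ne'
  have hsaw : ∀ k ∈ range n, (saw (k / n) : ℂ) = k / n - 1 / 2 + if k = 0 then 1 / 2 else 0 := by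
    intro k hk
    rcases Nat.eq_zero_or_pos k with rfl | hk0
    · simp
    · have hkn : (k : ℝ) < n := by exact_mod_cast mem_range.1 hk
      rw [saw_of_pos_of_lt_one (by positivity) ((div_lt_one (by positivity)).2 hkn),
        if_neg hk0.ne']
      push_cast
      ring
  have hsplit : ∑ k ∈ range n, (saw (k / n) : ℂ) * w ^ k
      = (∑ k ∈ range n, (k : ℂ) * w ^ k) / n - (∑ k ∈ range n, w ^ k) / 2 + 1 / 2 := by
    rw [sum_congr rfl fun k hk => by rw [hsaw k hk], sum_div, sum_div]
    simp only [add_mul, ite_mul, zero_mul, sum_add_distrib, sum_ite_eq', mem_range, hn, if_true,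
      pow_zero, mul_one, ← sum_sub_distrib]
    congr 1
    refine sum_congr rfl fun k _ => ?_
    ring
  rw [hsplit]
  by_cases hw1 : w = 1
  · obtain ⟨m, rfl⟩ : ∃ m, n = m + 1 := ⟨n - 1, by omega⟩
    have hgauss : (∑ k ∈ range (m + 1), (k : ℂ)) * 2 = ((m : ℂ) + 1) * m := by
      have h := congrArg (Nat.cast : ℕ → ℂ) (sum_range_id_mul_two (m + 1))
      push_cast [Nat.add_sub_cancel] at h
      exact h
    subst hw1
    simp only [one_pow, mul_one, sum_const, card_range, nsmul_eq_mul, sub_self, mul_zero, div_zero]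
    push_cast at hgauss ⊢
    field_simp
    linear_combination hgauss
  · have hw1' : w - 1 ≠ 0 := sub_ne_zero.2 hw1
    have hgeom : ∑ k ∈ range n, w ^ k = 0 := by rw [geom_sum_eq hw1, hw, sub_self, zero_div]
    have hweighted := sub_one_mul_sum_range_mul_pow w n
    simp only [pow_succ, ← sum_mul, hgeom, zero_mul, hw, mul_one, sub_zero] at hweighted
    rw [hgeom, eq_div_iff (mul_ne_zero two_ne_zero hw1')]
    field_simp
    linear_combination 2 * hweighted

open Complex in
noncomputable def sawFourier (n : ℕ) (m : ℤ) : ℂ :=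
  ∑ k ∈ range n, (saw (k / n) : ℂ) * exp (2 * π * I / n) ^ (m * k)

open Complex in
/-- When `n ∣ m` both sides are `0`: `Real.cot` vanishes at its poles, and the closed form in
`sum_range_saw_mul_pow` vanishes at `w = 1` because `x / 0 = 0`. -/
lemma ofReal_cot_pi_mul_div {n : ℕ} (hn : 0 < n) (m : ℤ) :
    (Real.cot (π * m / n) : ℂ) = 2 * I * sawFourier n m := by
  have hexp : exp (2 * π * I * (m / n)) = exp (2 * π * I / n) ^ m := by
    rw [← exp_int_mul]
    congr 1
    ring
  set w := exp (2 * π * I / n) ^ m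
  have hw : w ^ n = 1 := by
    rw [← zpow_natCast, ← zpow_mul, mul_comm m, zpow_mul, zpow_natCast,
      (isPrimitiveRoot_exp n hn.ne').pow_eq_one, one_zpow]
  have hsum : sawFourier n m = ∑ k ∈ range n, (saw (k / n) : ℂ) * w ^ k := by
    simp only [sawFourier, w, zpow_mul, zpow_natCast]
  rw [hsum, sum_range_saw_mul_pow hn hw, ofReal_cot, show (π * m / n : ℝ) = π * (m / n : ℂ) by
    push_cast; ring, cot_pi_eq_exp_ratio, hexp]
  by_cases hw1 : w = 1
  · simp [hw1]
  · have : w - 1 ≠ 0 := sub_ne_zero.2 hw1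
    have : 1 - w ≠ 0 := sub_ne_zero.2 (Ne.symm hw1)
    field_simp
    ring_nf
    simp only [I_sq]
    ring

open Complex in
lemma sum_range_exp_zpow {n : ℕ} (hn : 0 < n) (t : ℤ) :
    ∑ ν ∈ range n, exp (2 * π * I / n) ^ (t * ν) = if (n : ℤ) ∣ t then (n : ℂ) else 0 := by
  have hζ := isPrimitiveRoot_exp n hn.ne'
  simp only [zpow_mul, zpow_natCast]
  split_ifs with ht
  · simp [(hζ.zpow_eq_one_iff_dvd t).2 ht]
  · have hw1 : exp (2 * π * I / n) ^ t ≠ 1 := fun h => ht ((hζ.zpow_eq_one_iff_dvd t).1 h)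
    rw [geom_sum_eq hw1, ← zpow_natCast, ← zpow_mul, mul_comm t, zpow_mul, zpow_natCast,
      hζ.pow_eq_one, one_zpow, sub_self, zero_div]

open Complex in
lemma sum_sawFourier_mul {n : ℕ} (hn : 0 < n) (c : ℤ) :
    ∑ ν ∈ range n, sawFourier n (c * ν) * sawFourier n ν
      = n * ∑ k ∈ range n, (saw (k / n) : ℂ) * saw ((-(c * k) : ℤ) / n) := by
  have : NeZero n := ⟨hn.ne'⟩
  have hterm (ν k l : ℕ) : exp (2 * π * I / n) ^ (c * ν * k) * exp (2 * π * I / n) ^ ((ν : ℤ) * l)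
      = exp (2 * π * I / n) ^ ((c * k + l) * ν) := by
    rw [← zpow_add₀ (Complex.exp_ne_zero _)]
    ring_nf
  have hselect (k : ℕ) : ∑ l ∈ range n, (if (n : ℤ) ∣ c * k + l then (saw ((l : ℤ) / n) : ℂ) else 0)
      = saw ((-(c * k) : ℤ) / n) :=
    ((periodic_saw_div hn).comp ofReal).sum_range_ite_dvd (c * k)
  calc ∑ ν ∈ range n, sawFourier n (c * ν) * sawFourier n ν
      = ∑ k ∈ range n, ∑ l ∈ range n, (saw (k / n) : ℂ) * saw (l / n) *
          ∑ ν ∈ range n, exp (2 * π * I / n) ^ ((c * k + l) * ν) := by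
        simp_rw [sawFourier, sum_mul_sum, mul_sum]
        rw [sum_comm]
        refine sum_congr rfl fun k _ => ?_
        rw [sum_comm]
        refine sum_congr rfl fun l _ => sum_congr rfl fun ν _ => ?_
        rw [← hterm]
        ring
    _ = ∑ k ∈ range n, (saw (k / n) : ℂ) * (n *
          ∑ l ∈ range n, if (n : ℤ) ∣ c * k + l then (saw ((l : ℤ) / n) : ℂ) else 0) := by
        refine sum_congr rfl fun k _ => ?_
        rw [mul_sum, mul_sum]
        refine sum_congr rfl fun l _ => ?_
        rw [sum_range_exp_zpow hn]
        split_ifs <;> push_cast <;> ring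
    _ = n * ∑ k ∈ range n, (saw (k / n) : ℂ) * saw ((-(c * k) : ℤ) / n) := by
        simp_rw [hselect, mul_sum]
        refine sum_congr rfl fun k _ => ?_
        ring

lemma dedekindS_eq_sum_saw (c : ℤ) (n : ℕ) :
    dedekindS c n = ∑ k ∈ range n, saw (k / n) * saw (c * k / n) := by
  rcases n.eq_zero_or_pos with rfl | hn
  · simp [dedekindS]
  have hrange : dedekindS c n = 1 / (4 * n) *
      ∑ ν ∈ range n, Real.cot (π * ((c * ν : ℤ) : ℝ) / n) * Real.cot (π * ((ν : ℤ) : ℝ) / n) := by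
    rw [dedekindS, range_eq_Ico, sum_eq_sum_Ico_succ_bot hn]
    simp [mul_assoc, Real.cot_eq_cos_div_sin]
  have hn' : (n : ℂ) ≠ 0 := by exact_mod_cast hn.ne'
  apply Complex.ofReal_injective
  calc ((dedekindS c n : ℝ) : ℂ)
      = 1 / (4 * n) *
          ∑ ν ∈ range n, (2 * Complex.I) ^ 2 * (sawFourier n (c * ν) * sawFourier n ν) := by
        rw [hrange, Complex.ofReal_mul, Complex.ofReal_sum]
        congr 1
        · push_cast
          ring
        refine sum_congr rfl fun ν _ => ?_
        rw [Complex.ofReal_mul, ofReal_cot_pi_mul_div hn, ofReal_cot_pi_mul_div hn]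
        ring
    _ = - ∑ k ∈ range n, (saw (k / n) : ℂ) * saw ((-(c * k) : ℤ) / n) := by
        rw [← mul_sum, sum_sawFourier_mul hn, mul_pow, Complex.I_sq]
        field_simp
        ring
    _ = _ := by
        push_cast
        rw [← sum_neg_distrib]
        refine sum_congr rfl fun k _ => ?_
        rw [neg_div, saw_neg]
        push_cast
        ring

lemma dedekindS_two_mul_two_mul (c : ℤ) (n : ℕ) : dedekindS (2 * c) (2 * n) = dedekindS c n := by
  rcases n.eq_zero_or_pos with rfl | hn
  · simp [dedekindS]
  have hn' : (n : ℝ) ≠ 0 := by positivity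
  rw [dedekindS_eq_sum_saw, dedekindS_eq_sum_saw, two_mul n, sum_range_add, ← sum_add_distrib]
  refine sum_congr rfl fun k _ => ?_
  have hshift : ((n + k : ℕ) : ℝ) / (n + n : ℕ) = k / (n + n : ℕ) + 1 / 2 := by
    push_cast; field_simp; ring
  have hsecond : ((2 * c : ℤ) : ℝ) * (n + k : ℕ) / (n + n : ℕ) = c * k / n + c := by
    push_cast; field_simp; ring
  have hfirst : ((2 * c : ℤ) : ℝ) * k / (n + n : ℕ) = c * k / n := by
    push_cast; field_simp; ring
  have hdouble : 2 * ((k : ℝ) / (n + n : ℕ)) = k / n := by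
    push_cast; field_simp; ring
  rw [hshift, hsecond, hfirst, saw_add_intCast, saw_add_half, hdouble]
  ring

lemma sum_saw_comp_mul_eq_dedekindS {n : ℕ} {d : ℤ} (hd : IsCoprime d n) (c : ℤ) :
    ∑ μ ∈ range n, saw ((d * μ : ℤ) / n) * saw (c * (d * μ : ℤ) / n) = dedekindS c n := by
  rcases n.eq_zero_or_pos with rfl | hn
  · simp [dedekindS]
  have : NeZero n := ⟨hn.ne'⟩
  have hf : Function.Periodic (fun m : ℤ => saw (m / n) * saw (c * m / n)) n := by
    intro m
    have hn' : (n : ℝ) ≠ 0 := by positivity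
    simp only [Int.cast_add, Int.cast_natCast, add_div, div_self hn', mul_add,
      mul_div_assoc, mul_one]
    rw [periodic_saw, saw_add_intCast]
  rw [hf.sum_range_comp_mul hd, dedekindS_eq_sum_saw]
  simp

lemma sq_mul_Qpart {a b : ℕ} (ha : Even a) (hb : Odd b) :
    (b : ℝ) ^ 2 * Qpart a b = -6 * ∑ μ ∈ range b, ((μ : ℤ).bmod b * ((a : ℤ) * μ).bmod b : ℤ) := by
  obtain ⟨a', rfl⟩ := ha.two_dvd
  have h2 : IsCoprime (2 : ℤ) b := by
    obtain ⟨j, rfl⟩ := hb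
    exact ⟨-j, 1, by push_cast; ring⟩
  have hbR : (b : ℝ) ≠ 0 := by exact_mod_cast hb.pos.ne'
  set W := ∑ μ ∈ range b, saw (((μ : ℤ) : ℝ) / b + 1 / 2) * saw (((2 * a' * μ : ℤ) : ℝ) / b + 1 / 2)
  have hW_bmod :
      (b : ℝ) ^ 2 * W = ∑ μ ∈ range b, ((μ : ℤ).bmod b * (2 * a' * μ : ℤ).bmod b : ℤ) := by
    rw [mul_sum, Int.cast_sum]
    refine sum_congr rfl fun μ _ => ?_
    rw [saw_div_add_half_of_odd hb, saw_div_add_half_of_odd hb, Int.cast_mul]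
    field_simp
  have h_two_two : ∑ μ ∈ range b, saw (2 * ((μ : ℤ) / b)) * saw (2 * ((2 * a' * μ : ℤ) / b))
      = dedekindS (2 * a') b := by
    rw [← sum_saw_comp_mul_eq_dedekindS h2]
    refine sum_congr rfl fun μ _ => ?_
    congr 2 <;> push_cast <;> ring
  have h_two_one : ∑ μ ∈ range b, saw (2 * ((μ : ℤ) / b)) * saw ((2 * a' * μ : ℤ) / b)
      = dedekindS (2 * a') (2 * b) := by
    rw [dedekindS_two_mul_two_mul, ← sum_saw_comp_mul_eq_dedekindS h2]
    refine sum_congr rfl fun μ _ => ?_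
    congr 2 <;> push_cast <;> ring
  have h_one_two : ∑ μ ∈ range b, saw ((μ : ℤ) / b) * saw (2 * ((2 * a' * μ : ℤ) / b))
      = dedekindS (2 * (2 * a')) b := by
    rw [dedekindS_eq_sum_saw]
    refine sum_congr rfl fun μ _ => ?_
    congr 2
    push_cast
    ring
  have h_one_one : ∑ μ ∈ range b, saw ((μ : ℤ) / b) * saw ((2 * a' * μ : ℤ) / b)
      = dedekindS (2 * a') b := by
    rw [dedekindS_eq_sum_saw]
    refine sum_congr rfl fun μ _ => ?_
    congr 2
    push_cast
    ring
  have hW : W = 2 * dedekindS (2 * a') b - dedekindS (2 * a') (2 * b)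
      - dedekindS (2 * (2 * a')) b := by
    simp only [W, saw_add_half, sub_mul, mul_sub, sum_sub_distrib, h_two_two, h_two_one,
      h_one_two, h_one_one]
    ring
  have hQ : Qpart (2 * a') b = -6 * W := by
    rw [hW, Qpart]
    push_cast
    ring
  rw [hQ, mul_left_comm, hW_bmod]
  push_cast
  ring

lemma Int.bmod_neg_of_odd {b : ℕ} (hb : Odd b) (x : ℤ) : (-x).bmod b = -x.bmod b := by
  rw [Int.neg_bmod]
  split_ifs with h
  · have hx : (b : ℤ) ∣ x := by
      have hcop : IsCoprime (b : ℤ) 2 := by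
        obtain ⟨j, rfl⟩ := hb
        exact ⟨1, -j, by push_cast; ring⟩
      exact hcop.dvd_of_dvd_mul_left h
    rw [Int.bmod_eq_zero_of_dvd hx, neg_zero]
  · rfl

lemma periodic_bmod (b : ℕ) : Function.Periodic (fun x : ℤ => x.bmod b) b :=
  fun x => Int.add_bmod_right x b

lemma three_mul_sum_range_sub_sq (j : ℕ) :
    3 * ∑ μ ∈ range (2 * j + 1), ((μ : ℤ) - j) ^ 2 = j * (j + 1) * (2 * j + 1) := by
  induction j with
  | zero => simp
  | succ j ih =>
    rw [show 2 * (j + 1) + 1 = 2 * j + 1 + 1 + 1 by ring, sum_range_succ', sum_range_succ]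
    push_cast at ih ⊢
    simp only [add_sub_add_right_eq_sub]
    linear_combination ih

lemma sum_range_bmod_sq {b : ℕ} (hb : Odd b) :
    12 * ∑ μ ∈ range b, ((μ : ℤ).bmod b) ^ 2 = b * ((b : ℤ) ^ 2 - 1) := by
  have : NeZero b := ⟨hb.pos.ne'⟩
  obtain ⟨j, rfl⟩ := hb
  have hshift := (periodic_bmod (2 * j + 1)).comp (· ^ 2) |>.sum_range_comp_add (-j)
  simp only [Function.comp] at hshift
  rw [← hshift]
  have hbmod : ∀ μ ∈ range (2 * j + 1), ((μ : ℤ) + -j).bmod (2 * j + 1) = μ - j := by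
    intro μ hμ
    have := mem_range.1 hμ
    apply Int.bmod_eq_of_le <;> push_cast <;> omega
  rw [sum_congr rfl fun μ hμ => by rw [hbmod μ hμ]]
  push_cast
  linear_combination 4 * three_mul_sum_range_sub_sq j

lemma periodic_bmod_mul (b : ℕ) (a : ℤ) : Function.Periodic (fun x : ℤ => (a * x).bmod b) b :=
  fun x => by simp only [mul_add, Int.add_mul_bmod_self_right]

lemma sum_bmod_mul_bmod_eq_zero {a : ℤ} {b : ℕ} (hb : Odd b) (hab : (b : ℤ) ∣ a ^ 2 + 1) :
    ∑ μ ∈ range b, (μ : ℤ).bmod b * (a * μ).bmod b = 0 := by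
  have : NeZero b := ⟨hb.pos.ne'⟩
  obtain ⟨k, hk⟩ := hab
  have hcop : IsCoprime a b := ⟨-a, k, by linear_combination -hk⟩
  have hf : Function.Periodic (fun m : ℤ => m.bmod b * (a * m).bmod b) b :=
    (periodic_bmod b).mul (periodic_bmod_mul b a)
  have hanti (m : ℤ) : (a * m).bmod b * (a * (a * m)).bmod b = -(m.bmod b * (a * m).bmod b) := by
    have : a * (a * m) = -m + b * (k * m) := by linear_combination m * hk
    rw [this, Int.add_mul_bmod_self_left, Int.bmod_neg_of_odd hb]
    ring
  have hsum := hf.sum_range_comp_mul hcop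
  simp only [hanti, sum_neg_distrib] at hsum
  linarith

lemma dvd_sq_add_one_of_sq_dvd {a : ℤ} {b : ℕ} (hb : Odd b) (hab : IsCoprime a b)
    (h : (b : ℤ) ^ 2 ∣ 6 * ∑ μ ∈ range b, (μ : ℤ).bmod b * (a * μ).bmod b) :
    (b : ℤ) ∣ a ^ 2 + 1 := by
  have : NeZero b := ⟨hb.pos.ne'⟩
  have hb0 : (b : ℤ) ≠ 0 := by exact_mod_cast hb.pos.ne'
  have hS : 12 * ∑ μ ∈ range b, ((μ : ℤ).bmod b) ^ 2 = b * ((b : ℤ) ^ 2 - 1) :=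
    sum_range_bmod_sq hb
  have hS_mul : ∑ μ ∈ range b, ((a * μ).bmod b) ^ 2 = ∑ μ ∈ range b, ((μ : ℤ).bmod b) ^ 2 :=
    ((periodic_bmod b).comp (· ^ 2)).sum_range_comp_mul hab
  set D : ℕ → ℤ := fun μ => a * (μ : ℤ).bmod b - (a * μ).bmod b
  have hD (μ : ℕ) : (b : ℤ) ∣ D μ := by
    have : D μ = a * ((μ : ℤ).bmod b - μ) - ((a * μ).bmod b - a * μ) := by ring
    rw [this]
    exact dvd_sub (Int.dvd_bmod_sub_self.mul_left a) Int.dvd_bmod_sub_self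
  obtain ⟨c, hc⟩ : (b : ℤ) ∣ ∑ μ ∈ range b, D μ * (μ : ℤ).bmod b :=
    dvd_sum fun μ _ => (hD μ).mul_right _
  obtain ⟨f, hf⟩ : (b : ℤ) ^ 2 ∣ ∑ μ ∈ range b, D μ ^ 2 :=
    dvd_sum fun μ _ => pow_dvd_pow_of_dvd (hD μ) 2
  have hT : ∑ μ ∈ range b, (μ : ℤ).bmod b * (a * μ).bmod b
      = a * ∑ μ ∈ range b, ((μ : ℤ).bmod b) ^ 2 - ∑ μ ∈ range b, D μ * (μ : ℤ).bmod b := by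
    rw [mul_sum, ← sum_sub_distrib]
    exact sum_congr rfl fun μ _ => by simp only [D]; ring
  have hS_sq : ∑ μ ∈ range b, ((a * μ).bmod b) ^ 2 = a ^ 2 * ∑ μ ∈ range b, ((μ : ℤ).bmod b) ^ 2
      - 2 * a * ∑ μ ∈ range b, D μ * (μ : ℤ).bmod b + ∑ μ ∈ range b, D μ ^ 2 := by
    rw [mul_sum, mul_sum, ← sum_sub_distrib, ← sum_add_distrib]
    exact sum_congr rfl fun μ _ => by simp only [D]; ring
  obtain ⟨z, hz⟩ := h
  rw [hT, hc] at hz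
  rw [hS_mul, hc, hf] at hS_sq
  have hcop : IsCoprime (b : ℤ) ((b : ℤ) ^ 2 - 1) := ⟨b, -1, by ring⟩
  -- eliminating the sums gives `(a² + 1)(b² - 1) = b (4az + 12f)`
  refine hcop.dvd_of_dvd_mul_right ⟨4 * a * z + 12 * f, mul_left_cancel₀ hb0 ?_⟩
  linear_combination -(a ^ 2 + 1) * hS + 4 * a * hz + 12 * hS_sq

theorem Qpart_int_imp (a b : ℕ) (haev : Even a) (hbodd : Odd b)
    (hcop : Nat.gcd a b = 1) :
    ((∃ z : ℤ, Qpart a b = (z : ℝ)) → (b : ℤ) ∣ (a : ℤ) ^ 2 + 1) ∧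
      (Qpart a b = 0 ↔ (b : ℤ) ∣ (a : ℤ) ^ 2 + 1) := by
  have hQ := sq_mul_Qpart haev hbodd
  have hb : (b : ℝ) ≠ 0 := by exact_mod_cast hbodd.pos.ne'
  have of_int : (∃ z : ℤ, Qpart a b = (z : ℝ)) → (b : ℤ) ∣ (a : ℤ) ^ 2 + 1 := by
    rintro ⟨z, hz⟩
    refine dvd_sq_add_one_of_sq_dvd hbodd (Nat.isCoprime_iff_coprime.2 hcop) ⟨-z, ?_⟩
    rw [hz] at hQ
    have h6 : ((6 * ∑ μ ∈ range b, (μ : ℤ).bmod b * ((a : ℤ) * μ).bmod b : ℤ) : ℝ)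
        = ((b : ℤ) ^ 2 * -z : ℤ) := by
      push_cast at hQ ⊢
      linarith
    exact_mod_cast h6
  refine ⟨of_int, fun h0 => of_int ⟨0, by simp [h0]⟩, fun hdvd => ?_⟩
  rw [sum_bmod_mul_bmod_eq_zero hbodd hdvd, Int.cast_zero, mul_zero] at hQ
  exact (mul_eq_zero.1 hQ).resolve_left (pow_ne_zero 2 hb)
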